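/- Let S₁ and S₂ be compactly branching WMTS with S₂ deterministic. Then the thorough and modal refinement distances coincide: d_t(S₁,S₂) = d_m(S₁,S₂). -/

import Mathlib

open scoped ENNReal

namespace WMTSQuant

/-- A closed extended-integer interval `[lo, hi]` with `lo ∈ ℤ ∪ {-∞}`,
`hi ∈ ℤ ∪ {∞}` and `lo ≤ hi`. -/
structure EInterval where
  lo : EReal
  hi : EReal
  lo_mem : lo = ⊥ ∨ ∃ n : ℤ, lo = ((n : ℝ) : EReal)
  hi_mem : hi = ⊤ ∨ ∃ n : ℤ, hi = ((n : ℝ) : EReal)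
  lo_le_hi : lo ≤ hi

/-- Specification labels 𝕂 = Σ × 𝕀. -/
abbrev SLabel (Act : Type) := Act × EInterval

/-- The refinement order ⊑ on specification labels. -/
def LabelLE {Act : Type} (k k' : SLabel Act) : Prop :=
  k.1 = k'.1 ∧ k'.2.lo ≤ k.2.lo ∧ k.2.hi ≤ k'.2.hi

/-- Implementation labels: singleton integer intervals. -/
def IsImpLabel {Act : Type} (k : SLabel Act) : Prop :=
  ∃ n : ℤ, k.2.lo = ((n : ℝ) : EReal) ∧ k.2.hi = ((n : ℝ) : EReal)

/-- Truncation of an extended real to `[0,∞]`. -/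
noncomputable def erealToNNE (x : EReal) : ℝ≥0∞ :=
  if x = ⊤ then ⊤ else ENNReal.ofReal x.toReal

open Classical in
/-- The label distance d_𝕂. -/
noncomputable def dK {Act : Type} (k ℓ : SLabel Act) : ℝ≥0∞ :=
  if k.1 = ℓ.1 then erealToNNE (max (ℓ.2.lo - k.2.lo) (max (k.2.hi - ℓ.2.hi) 0)) else ⊤

/-- Weighted modal transition systems. -/
structure WMTS (Act : Type) where
  State : Type
  init : State
  may : State → SLabel Act → State → Prop
  must : State → SLabel Act → State → Prop
  must_may : ∀ s k s', must s k s' → ∃ ℓ, LabelLE k ℓ ∧ may s ℓ s'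

variable {Act : Type}

/-- Implementations: `must = may`, all labels singleton integer intervals. -/
def WMTS.IsImplementation (S : WMTS Act) : Prop :=
  (∀ s k s', S.may s k s' ↔ S.must s k s') ∧
    ∀ s k s', S.must s k s' → IsImpLabel k

/-- (Boolean) modal refinement `S₁ ≤ₘ S₂`. -/
def Refines (S₁ S₂ : WMTS Act) : Prop :=
  ∃ R : S₁.State → S₂.State → Prop, R S₁.init S₂.init ∧
    ∀ s₁ s₂, R s₁ s₂ →
      (∀ k₁ t₁, S₁.may s₁ k₁ t₁ →
        ∃ k₂ t₂, S₂.may s₂ k₂ t₂ ∧ LabelLE k₁ k₂ ∧ R t₁ t₂) ∧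
      (∀ k₂ t₂, S₂.must s₂ k₂ t₂ →
        ∃ k₁ t₁, S₁.must s₁ k₁ t₁ ∧ LabelLE k₁ k₂ ∧ R t₁ t₂)

/-- Implementation semantics ⟦S⟧. -/
def Impl (S : WMTS Act) : Set (WMTS Act) :=
  {I | I.IsImplementation ∧ Refines I S}

/-- The endofunction whose least fixed point is the modal refinement distance. -/
noncomputable def dmF (lam : ℝ≥0∞) (S₁ S₂ : WMTS Act) :
    (S₁.State → S₂.State → ℝ≥0∞) →o (S₁.State → S₂.State → ℝ≥0∞) where
  toFun f := fun s₁ s₂ =>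
    max
      (⨆ k₁, ⨆ t₁, ⨆ _ : S₁.may s₁ k₁ t₁,
        ⨅ k₂, ⨅ t₂, ⨅ _ : S₂.may s₂ k₂ t₂, dK k₁ k₂ + lam * f t₁ t₂)
      (⨆ k₂, ⨆ t₂, ⨆ _ : S₂.must s₂ k₂ t₂,
        ⨅ k₁, ⨅ t₁, ⨅ _ : S₁.must s₁ k₁ t₁, dK k₁ k₂ + lam * f t₁ t₂)
  monotone' := by
    intro f g hfg s₁ s₂
    dsimp only
    gcongr with k₁ t₁ h k₂ t₂ h' k₂ t₂ h k₁ t₁ h' <;> exact hfg _ _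

/-- The modal refinement distance between states. -/
noncomputable def dm (lam : ℝ≥0∞) (S₁ S₂ : WMTS Act) :
    S₁.State → S₂.State → ℝ≥0∞ :=
  OrderHom.lfp (dmF lam S₁ S₂)

/-- The modal refinement distance between systems. -/
noncomputable def dmInit (lam : ℝ≥0∞) (S₁ S₂ : WMTS Act) : ℝ≥0∞ :=
  dm lam S₁ S₂ S₁.init S₂.init

/-- The endofunction whose least fixed point is the implementation distance. -/
noncomputable def diF (lam : ℝ≥0∞) (I₁ I₂ : WMTS Act) :
    (I₁.State → I₂.State → ℝ≥0∞) →o (I₁.State → I₂.State → ℝ≥0∞) where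
  toFun f := fun i₁ i₂ =>
    max
      (⨆ k₁, ⨆ j₁, ⨆ _ : I₁.must i₁ k₁ j₁,
        ⨅ k₂, ⨅ j₂, ⨅ _ : I₂.must i₂ k₂ j₂, dK k₁ k₂ + lam * f j₁ j₂)
      (⨆ k₂, ⨆ j₂, ⨆ _ : I₂.must i₂ k₂ j₂,
        ⨅ k₁, ⨅ j₁, ⨅ _ : I₁.must i₁ k₁ j₁, dK k₁ k₂ + lam * f j₁ j₂)
  monotone' := by
    intro f g hfg i₁ i₂
    dsimp only
    gcongr with k₁ t₁ h k₂ t₂ h' k₂ t₂ h k₁ t₁ h' <;> exact hfg _ _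

/-- The implementation distance between states of implementations. -/
noncomputable def di (lam : ℝ≥0∞) (I₁ I₂ : WMTS Act) :
    I₁.State → I₂.State → ℝ≥0∞ :=
  OrderHom.lfp (diF lam I₁ I₂)

/-- The implementation distance between implementations. -/
noncomputable def diInit (lam : ℝ≥0∞) (I₁ I₂ : WMTS Act) : ℝ≥0∞ :=
  di lam I₁ I₂ I₁.init I₂.init

/-- The thorough refinement distance. -/
noncomputable def dt (lam : ℝ≥0∞) (S₁ S₂ : WMTS Act) : ℝ≥0∞ :=
  ⨆ I₁ ∈ Impl S₁, ⨅ I₂ ∈ Impl S₂, diInit lam I₁ I₂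


/-- Pointwise sum of intervals. -/
noncomputable def EInterval.add (I J : EInterval) : EInterval where
  lo := I.lo + J.lo
  hi := I.hi + J.hi
  lo_mem := by
    rcases I.lo_mem with h | ⟨n, h⟩
    · exact Or.inl (by rw [h, EReal.bot_add])
    · rcases J.lo_mem with h' | ⟨m, h'⟩
      · exact Or.inl (by rw [h', EReal.add_bot])
      · exact Or.inr ⟨n + m, by rw [h, h', ← EReal.coe_add]; norm_cast⟩
  hi_mem := by
    rcases I.hi_mem with h | ⟨n, h⟩
    · exact Or.inl (by rw [h, EReal.top_add_of_ne_bot]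
                       rcases J.hi_mem with h' | ⟨m, h'⟩ <;> simp [h'])
    · rcases J.hi_mem with h' | ⟨m, h'⟩
      · exact Or.inl (by rw [h', EReal.add_top_of_ne_bot]; simp [h])
      · exact Or.inr ⟨n + m, by rw [h, h', ← EReal.coe_add]; norm_cast⟩
  lo_le_hi := add_le_add I.lo_le_hi J.lo_le_hi

/-- Widening `I ± δ` of an interval. -/
noncomputable def EInterval.widen (I : EInterval) (δ : ℕ) : EInterval where
  lo := I.lo - ((δ : ℝ) : EReal)
  hi := I.hi + ((δ : ℝ) : EReal)
  lo_mem := by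
    rcases I.lo_mem with h | ⟨n, h⟩
    · exact Or.inl (by rw [h, EReal.bot_sub])
    · exact Or.inr ⟨n - δ, by rw [h, ← EReal.coe_sub]; norm_cast⟩
  hi_mem := by
    rcases I.hi_mem with h | ⟨n, h⟩
    · exact Or.inl (by rw [h, EReal.top_add_of_ne_bot (EReal.coe_ne_bot _)])
    · exact Or.inr ⟨n + δ, by rw [h, ← EReal.coe_add]; norm_cast⟩
  lo_le_hi := by
    refine le_trans ?_ (le_trans I.lo_le_hi ?_)
    · rw [sub_eq_add_neg]
      nth_rewrite 2 [show I.lo = I.lo + 0 by rw [add_zero]]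
      refine add_le_add le_rfl ?_
      rw [← EReal.coe_neg, ← EReal.coe_zero, EReal.coe_le_coe_iff]
      simp
    · nth_rewrite 1 [show I.hi = I.hi + 0 by rw [add_zero]]
      refine add_le_add le_rfl ?_
      rw [← EReal.coe_zero, EReal.coe_le_coe_iff]
      simp



/-- Symmetrization of a hemimetric. -/
noncomputable def symDist {α : Type*} (d : α → α → ℝ≥0∞) : α → α → ℝ≥0∞ :=
  fun x y => max (d x y) (d y x)

/-- Product distance. -/
noncomputable def prodDist {α β : Type*} (d : α → α → ℝ≥0∞) (e : β → β → ℝ≥0∞) :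
    α × β → α × β → ℝ≥0∞ :=
  fun p q => d p.1 q.1 + e p.2 q.2

/-- (Sequential) compactness of a set with respect to an `ℝ≥0∞`-valued distance. -/
def CompactIn {α : Type*} (d : α → α → ℝ≥0∞) (A : Set α) : Prop :=
  ∀ u : ℕ → α, (∀ n, u n ∈ A) →
    ∃ x ∈ A, ∃ φ : ℕ → ℕ, StrictMono φ ∧
      Filter.Tendsto (fun n => d x (u (φ n))) Filter.atTop (nhds 0)

/-- Compactly branching WMTS. -/
def CompactlyBranching (lam : ℝ≥0∞) (S : WMTS Act) : Prop :=
  ∀ s : S.State,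
    CompactIn (prodDist (symDist (dm lam S S)) (symDist dK))
      {p : S.State × SLabel Act | S.may s p.2 p.1} ∧
    CompactIn (prodDist (symDist (dm lam S S)) (symDist dK))
      {p : S.State × SLabel Act | S.must s p.2 p.1}

/-- Deterministic WMTS. -/
def Deterministic (S : WMTS Act) : Prop :=
  ∀ (s : S.State) (a : Act) (I₁ I₂ : EInterval) (t₁ t₂ : S.State),
    S.may s (a, I₁) t₁ → S.may s (a, I₂) t₂ → I₁ = I₂ ∧ t₁ = t₂

/-- `S'` is an ε-relaxation of `S`. -/
def Relaxation (lam ε : ℝ≥0∞) (S S' : WMTS Act) : Prop :=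
  Refines S S' ∧ dmInit lam S' S ≤ ε

/-- The ε-extended implementation semantics ⟦S⟧⁺ᵉ. -/
def ImplExt (lam ε : ℝ≥0∞) (S : WMTS Act) : Set (WMTS Act) :=
  {I | I.IsImplementation ∧ dmInit lam I S ≤ ε}

/-- The δ-widening S⁺δ of a WMTS. -/
noncomputable def WMTS.widen (S : WMTS Act) (δ : ℕ) : WMTS Act where
  State := S.State
  init := S.init
  may s k t := ∃ a I, S.may s (a, I) t ∧ k = (a, I.widen δ)
  must s k t := ∃ a I, S.must s (a, I) t ∧ k = (a, I.widen δ)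
  must_may := by
    rintro s k t ⟨a, I, h, rfl⟩
    obtain ⟨ℓ, hle, hmay⟩ := S.must_may _ _ _ h
    refine ⟨(ℓ.1, ℓ.2.widen δ), ⟨hle.1, ?_, ?_⟩, ℓ.1, ℓ.2, hmay, rfl⟩
    · exact EReal.sub_le_sub hle.2.1 le_rfl
    · exact add_le_add hle.2.2 le_rfl

/-- Definedness of label synchronization ⊕. -/
def OplusDefined (k ℓ : SLabel Act) : Prop := k.1 = ℓ.1

/-- Label synchronization ⊕ (adding the intervals). -/
noncomputable def oplus (k ℓ : SLabel Act) : SLabel Act :=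
  (k.1, k.2.add ℓ.2)

/-- Definedness of label quotient ⊖ (equal actions, the difference interval is a
valid extended-integer interval). -/
def OminusDefined (k ℓ : SLabel Act) : Prop :=
  k.1 = ℓ.1 ∧ k.2.lo - ℓ.2.lo ≤ k.2.hi - ℓ.2.hi ∧
    (k.2.lo - ℓ.2.lo = ⊥ ∨ ∃ n : ℤ, k.2.lo - ℓ.2.lo = ((n : ℝ) : EReal)) ∧
    (k.2.hi - ℓ.2.hi = ⊤ ∨ ∃ n : ℤ, k.2.hi - ℓ.2.hi = ((n : ℝ) : EReal))

/-- Label quotient ⊖. -/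
noncomputable def ominus (k ℓ : SLabel Act) (h : OminusDefined k ℓ) : SLabel Act :=
  (k.1, ⟨k.2.lo - ℓ.2.lo, k.2.hi - ℓ.2.hi, h.2.2.1, h.2.2.2, h.2.1⟩)

/-- Structural composition S₁ ∥ S₂ (CSP-style synchronization, adding weights). -/
noncomputable def par (S₁ S₂ : WMTS Act) : WMTS Act where
  State := S₁.State × S₂.State
  init := (S₁.init, S₂.init)
  may p k q := ∃ k₁ k₂, S₁.may p.1 k₁ q.1 ∧ S₂.may p.2 k₂ q.2 ∧
    OplusDefined k₁ k₂ ∧ k = oplus k₁ k₂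
  must p k q := ∃ k₁ k₂, S₁.must p.1 k₁ q.1 ∧ S₂.must p.2 k₂ q.2 ∧
    OplusDefined k₁ k₂ ∧ k = oplus k₁ k₂
  must_may := by
    rintro p k q ⟨k₁, k₂, h₁, h₂, hd, rfl⟩
    obtain ⟨ℓ₁, hle₁, hmay₁⟩ := S₁.must_may _ _ _ h₁
    obtain ⟨ℓ₂, hle₂, hmay₂⟩ := S₂.must_may _ _ _ h₂
    refine ⟨oplus ℓ₁ ℓ₂, ⟨?_, ?_, ?_⟩,
      ℓ₁, ℓ₂, hmay₁, hmay₂, by rw [OplusDefined, ← hle₁.1, ← hle₂.1]; exact hd, rfl⟩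
    · exact hle₁.1
    · exact add_le_add hle₁.2.1 hle₂.2.1
    · exact add_le_add hle₁.2.2 hle₂.2.2

section Quotient

variable (S₁ S₂ : WMTS Act)

/-- May transitions of the (unpruned) quotient; `none` is the universal state u. -/
def qmay : Option (S₁.State × S₂.State) → SLabel Act → Option (S₁.State × S₂.State) → Prop
  | some p, k, some q =>
      (∃ k₁ k₂, ∃ h : OminusDefined k₁ k₂,
        S₁.may p.1 k₁ q.1 ∧ S₂.may p.2 k₂ q.2 ∧ k = ominus k₁ k₂ h) ∨
      (∃ k₁ k₂, ∃ h : OminusDefined k₁ k₂,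
        S₁.must p.1 k₁ q.1 ∧ S₂.must p.2 k₂ q.2 ∧ k = ominus k₁ k₂ h)
  | some p, k, none => ∀ k₂ t₂, S₂.may p.2 k₂ t₂ → ¬ OplusDefined k k₂
  | none, _, none => True
  | none, _, some _ => False

/-- Must transitions of the (unpruned) quotient. -/
def qmust : Option (S₁.State × S₂.State) → SLabel Act → Option (S₁.State × S₂.State) → Prop
  | some p, k, some q =>
      ∃ k₁ k₂, ∃ h : OminusDefined k₁ k₂,
        S₁.must p.1 k₁ q.1 ∧ S₂.must p.2 k₂ q.2 ∧ k = ominus k₁ k₂ h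
  | _, _, _ => False

/-- Inconsistent states of the quotient. -/
def QBad : Option (S₁.State × S₂.State) → Prop
  | some p => ∃ k₁ t₁, S₁.must p.1 k₁ t₁ ∧
      ∀ k₂ t₂, S₂.must p.2 k₂ t₂ → ¬ OminusDefined k₁ k₂
  | none => False

/-- States removed by pruning: those that can reach an inconsistent state via
must transitions (reflexive-transitive closure of `pre`). -/
def QPruned (p : Option (S₁.State × S₂.State)) : Prop :=
  ∃ q, Relation.ReflTransGen (fun x y => ∃ k, qmust S₁ S₂ x k y) p q ∧ QBad S₁ S₂ q

/-- The quotient S₁ ⫽ S₂, defined whenever the initial state survives pruning. -/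
noncomputable def quotient' (h : ¬ QPruned S₁ S₂ (some (S₁.init, S₂.init))) :
    WMTS Act where
  State := {p : Option (S₁.State × S₂.State) // ¬ QPruned S₁ S₂ p}
  init := ⟨some (S₁.init, S₂.init), h⟩
  may p k q := qmay S₁ S₂ p.1 k q.1
  must p k q := qmust S₁ S₂ p.1 k q.1
  must_may := by
    rintro ⟨p, hp⟩ k ⟨q, hq⟩ hmust
    refine ⟨k, ⟨rfl, le_rfl, le_rfl⟩, ?_⟩
    cases p with
    | none => exact hmust.elim
    | some p =>
      cases q with
      | none => exact hmust.elim
      | some q => exact Or.inr hmust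

end Quotient

/-- Formulae of the logic L. -/
inductive Formula (Act : Type) where
  | tt : Formula Act
  | ff : Formula Act
  | diam : SLabel Act → Formula Act → Formula Act
  | box : SLabel Act → Formula Act → Formula Act
  | and : Formula Act → Formula Act → Formula Act
  | or : Formula Act → Formula Act → Formula Act

/-- Disjunction-free formulae. -/
def Formula.DisjFree : Formula Act → Prop
  | .tt => True
  | .ff => True
  | .diam _ φ => φ.DisjFree
  | .box _ φ => φ.DisjFree
  | .and φ ψ => φ.DisjFree ∧ ψ.DisjFree
  | .or _ _ => False

/-- Quantitative semantics ⟦φ⟧ : S → [0,∞] of the logic L. -/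
noncomputable def sem (lam : ℝ≥0∞) (S : WMTS Act) : Formula Act → S.State → ℝ≥0∞
  | .tt, _ => 0
  | .ff, _ => ⊤
  | .and φ ψ, s => max (sem lam S φ s) (sem lam S ψ s)
  | .or φ ψ, s => min (sem lam S φ s) (sem lam S ψ s)
  | .diam ℓ φ, s =>
      ⨅ k, ⨅ t, ⨅ _ : S.must s k t ∧ dK k ℓ ≠ ⊤, dK k ℓ + lam * sem lam S φ t
  | .box ℓ φ, s =>
      ⨆ k, ⨆ t, ⨆ _ : S.may s k t ∧ dK k ℓ ≠ ⊤, dK k ℓ + lam * sem lam S φ t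

/-- ⟦φ⟧S = ⟦φ⟧s⁰. -/
noncomputable def semInit (lam : ℝ≥0∞) (S : WMTS Act) (φ : Formula Act) : ℝ≥0∞ :=
  sem lam S φ S.init

/-!
For `d_t ≤ d_m`: an implementation `I ∈ ⟦S₁⟧` satisfies `d_m(I, S₂) ≤ d_m(S₁, S₂)`, and running
`I` alongside `S₂`, answering every step of `I` by an integer point of a `(1 - λ)ε`-optimal move
of `S₂` in the fixed-point equation of `d_m`, produces an implementation of `S₂` at distance at
most `d_m(I, S₂) + ε` from `I`; the errors add up to `Σ λⁿ (1 - λ) ε = ε`.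

For `d_m ≤ d_t`: the thorough distance between states is a pre-fixed point of the operator whose
least fixed point is `d_m`. Both labels and thorough distances are suprema (over the integer
points of an interval, resp. over implementations), and implementations can be glued under a
fresh root. For a must-transition of `s₂`, pick for each must-transition of `s₁` a point and an
implementation of its target and glue them all. For a may-transition of `s₁`, determinism of `S₂`
leaves at most one may-transition of `s₂` with the same action, so the supremum commutes with the
infimum over those transitions and a single glued branch suffices.
-/

lemma eq_top_of_forall_natCast_le {x : ℝ≥0∞} (h : ∀ N : ℕ, (N : ℝ≥0∞) ≤ x) :
    x = ⊤ := by
  refine top_unique (le_of_forall_lt fun c hc => ?_)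
  obtain ⟨N, hN⟩ := ENNReal.exists_nat_gt hc.ne
  exact hN.trans_le (h N)

lemma ne_top_of_add_mul_le {a b c d : ℝ≥0∞} (h : a + b * c ≤ d) (hd : d ≠ ⊤) (hb : b ≠ 0) :
    c ≠ ⊤ := by
  rintro rfl
  rw [ENNReal.mul_top hb, add_top, top_le_iff] at h
  exact hd h

lemma iInf_iSup_le_iSup_iInf_of_subsingleton {α ι κ : Type*} [CompleteLattice α] [Nonempty κ]
    {f : ι → κ → α} (p : ι → Prop) (hp : ∀ i j, p i → p j → i = j)
    (hf : ∀ i, ¬ p i → ∀ x, f i x = ⊤) : ⨅ i, ⨆ x, f i x ≤ ⨆ x, ⨅ i, f i x := by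
  by_cases h : ∃ i, p i
  · obtain ⟨i, hi⟩ := h
    refine (iInf_le _ i).trans (iSup_mono fun x => le_iInf fun j => ?_)
    by_cases hj : p j
    · rw [hp i j hi hj]
    · rw [hf j hj x]; exact le_top
  · simp only [hf _ (not_exists.mp h _), iSup_const, iInf_top, le_refl]

lemma iInf_iInf_iInf_eq_iInf_subtype {α β γ : Type*} [CompleteLattice γ] (P : α → β → Prop)
    (f : α → β → γ) :
    ⨅ a, ⨅ b, ⨅ _ : P a b, f a b = ⨅ μ : {μ : α × β // P μ.1 μ.2}, f μ.1.1 μ.1.2 := by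
  simp [iInf_subtype, iInf_prod]

noncomputable def EInterval.point (n : ℤ) : EInterval :=
  ⟨((n : ℝ) : EReal), ((n : ℝ) : EReal), Or.inr ⟨n, rfl⟩, Or.inr ⟨n, rfl⟩, le_rfl⟩

lemma EInterval.ext {I J : EInterval} (hlo : I.lo = J.lo) (hhi : I.hi = J.hi) : I = J := by
  cases I; cases J; cases hlo; cases hhi; rfl

namespace LabelLE

lemma refl (k : SLabel Act) : LabelLE k k := ⟨rfl, le_rfl, le_rfl⟩

lemma trans {k k' k'' : SLabel Act} (h : LabelLE k k') (h' : LabelLE k' k'') : LabelLE k k'' :=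
  ⟨h.1.trans h'.1, h'.2.1.trans h.2.1, h.2.2.trans h'.2.2⟩

end LabelLE

lemma exists_point_labelLE (k : SLabel Act) : ∃ n : ℤ, LabelLE (k.1, EInterval.point n) k := by
  rcases k.2.lo_mem with h | ⟨n, h⟩
  · rcases k.2.hi_mem with h' | ⟨m, h'⟩
    · exact ⟨0, rfl, h ▸ bot_le, h' ▸ le_top⟩
    · exact ⟨m, rfl, h ▸ bot_le, h'.ge⟩
  · exact ⟨n, rfl, h.le, h.ge.trans k.2.lo_le_hi⟩

lemma coe_intCast_le_coe_intCast {m n : ℤ} (h : m ≤ n) :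
    ((m : ℝ) : EReal) ≤ ((n : ℝ) : EReal) := by
  exact_mod_cast h

lemma exists_point_labelLE_le_of_lo_eq_bot {k : SLabel Act} (hk : k.2.lo = ⊥) (N : ℤ) :
    ∃ n ≤ N, LabelLE (k.1, EInterval.point n) k := by
  obtain ⟨n, -, -, hn⟩ := exists_point_labelLE k
  exact ⟨min n N, min_le_right _ _, rfl, hk ▸ bot_le,
    (coe_intCast_le_coe_intCast (min_le_left n N)).trans hn⟩

lemma exists_point_labelLE_ge_of_hi_eq_top {k : SLabel Act} (hk : k.2.hi = ⊤) (N : ℤ) :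
    ∃ n ≥ N, LabelLE (k.1, EInterval.point n) k := by
  obtain ⟨n, -, hn, -⟩ := exists_point_labelLE k
  exact ⟨max n N, le_max_right _ _, rfl,
    hn.trans (coe_intCast_le_coe_intCast (le_max_left n N)), hk ▸ le_top⟩

instance (k : SLabel Act) : Nonempty {n : ℤ // LabelLE (k.1, EInterval.point n) k} :=
  nonempty_subtype.mpr (exists_point_labelLE k)

lemma IsImpLabel.eq_point {k : SLabel Act} (h : IsImpLabel k) :
    ∃ n : ℤ, k = (k.1, EInterval.point n) := by
  obtain ⟨n, hlo, hhi⟩ := h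
  exact ⟨n, Prod.ext rfl (EInterval.ext hlo hhi)⟩

lemma isImpLabel_point (a : Act) (n : ℤ) : IsImpLabel (a, EInterval.point n) := ⟨n, rfl, rfl⟩

lemma erealToNNE_mono : Monotone erealToNNE := by
  intro x y hxy
  unfold erealToNNE
  rcases eq_or_ne y ⊤ with rfl | hy
  · simp
  rw [if_neg hy, if_neg (ne_top_of_le_ne_top hy hxy)]
  rcases eq_or_ne x ⊥ with rfl | hx
  · simp
  · exact ENNReal.ofReal_le_ofReal (EReal.toReal_le_toReal hxy hx hy)

lemma erealToNNE_max (x y : EReal) :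
    erealToNNE (max x y) = max (erealToNNE x) (erealToNNE y) :=
  erealToNNE_mono.map_max

lemma erealToNNE_coe (r : ℝ) : erealToNNE (r : EReal) = ENNReal.ofReal r := by
  rw [erealToNNE, if_neg (EReal.coe_ne_top r), EReal.toReal_coe]

lemma erealToNNE_zero : erealToNNE 0 = 0 := by simp [erealToNNE]

lemma dK_of_ne {k ℓ : SLabel Act} (h : k.1 ≠ ℓ.1) : dK k ℓ = ⊤ := by
  simp [dK, h]

lemma dK_of_eq {k ℓ : SLabel Act} (h : k.1 = ℓ.1) :
    dK k ℓ = max (erealToNNE (ℓ.2.lo - k.2.lo)) (erealToNNE (k.2.hi - ℓ.2.hi)) := by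
  simp [dK, h, erealToNNE_max, erealToNNE_zero]

lemma dK_mono_left {k k' ℓ : SLabel Act} (h : LabelLE k k') : dK k ℓ ≤ dK k' ℓ := by
  rcases eq_or_ne k'.1 ℓ.1 with hk | hk
  · rw [dK_of_eq (h.1.trans hk), dK_of_eq hk]
    exact max_le_max (erealToNNE_mono (EReal.sub_le_sub le_rfl h.2.1))
      (erealToNNE_mono (EReal.sub_le_sub h.2.2 le_rfl))
  · rw [dK_of_ne hk]; exact le_top

lemma dK_anti_right {k ℓ ℓ' : SLabel Act} (h : LabelLE ℓ ℓ') : dK k ℓ' ≤ dK k ℓ := by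
  rcases eq_or_ne k.1 ℓ.1 with hk | hk
  · rw [dK_of_eq hk, dK_of_eq (hk.trans h.1)]
    exact max_le_max (erealToNNE_mono (EReal.sub_le_sub h.2.1 le_rfl))
      (erealToNNE_mono (EReal.sub_le_sub le_rfl h.2.2))
  · rw [dK_of_ne hk]; exact le_top

lemma natCast_le_erealToNNE_sub {m n : ℤ} {N : ℕ} (h : m + N ≤ n) :
    (N : ℝ≥0∞) ≤ erealToNNE (((n : ℝ) : EReal) - ((m : ℝ) : EReal)) := by
  rw [← EReal.coe_sub, erealToNNE_coe, ← ENNReal.ofReal_natCast]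
  refine ENNReal.ofReal_le_ofReal ?_
  have : (m : ℝ) + N ≤ n := by exact_mod_cast h
  linarith

lemma erealToNNE_sub_le_erealToNNE_sub {m n : ℤ} (h : m ≤ n) :
    erealToNNE (((m : ℝ) : EReal) - ((n : ℝ) : EReal)) ≤
      erealToNNE (((n : ℝ) : EReal) - ((m : ℝ) : EReal)) := by
  refine erealToNNE_mono ?_
  rw [← EReal.coe_sub, ← EReal.coe_sub, EReal.coe_le_coe_iff]
  have : (m : ℝ) ≤ n := by exact_mod_cast h
  linarith

lemma erealToNNE_lo_sub_lo_le_iSup (k : SLabel Act) (J : EInterval) :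
    erealToNNE (J.lo - k.2.lo) ≤ ⨆ n : {n : ℤ // LabelLE (k.1, EInterval.point n) k},
      erealToNNE (J.lo - ((n : ℝ) : EReal)) := by
  rcases k.2.lo_mem with hk | ⟨v, hv⟩
  · rcases J.lo_mem with hJ | ⟨U, hU⟩
    · simp [hJ, EReal.bot_sub, erealToNNE]
    refine le_top.trans (eq_top_of_forall_natCast_le fun N => ?_).ge
    obtain ⟨n, hnN, hn⟩ := exists_point_labelLE_le_of_lo_eq_bot hk (U - N)
    exact le_iSup_of_le ⟨n, hn⟩ (hU ▸ natCast_le_erealToNNE_sub (m := n) (N := N) (by omega))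
  · exact le_iSup_of_le ⟨v, rfl, hv.le, hv.ge.trans k.2.lo_le_hi⟩ (hv ▸ le_rfl)

lemma erealToNNE_hi_sub_hi_le_iSup (k : SLabel Act) (J : EInterval) :
    erealToNNE (k.2.hi - J.hi) ≤ ⨆ n : {n : ℤ // LabelLE (k.1, EInterval.point n) k},
      erealToNNE (((n : ℝ) : EReal) - J.hi) := by
  rcases k.2.hi_mem with hk | ⟨w, hw⟩
  · rcases J.hi_mem with hJ | ⟨V, hV⟩
    · simp [hJ, EReal.sub_top, erealToNNE]
    refine le_top.trans (eq_top_of_forall_natCast_le fun N => ?_).ge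
    obtain ⟨n, hnN, hn⟩ := exists_point_labelLE_ge_of_hi_eq_top hk (V + N)
    exact le_iSup_of_le ⟨n, hn⟩ (hV ▸ natCast_le_erealToNNE_sub (n := n) (N := N) (by omega))
  · exact le_iSup_of_le ⟨w, rfl, k.2.lo_le_hi.trans hw.le, hw.ge⟩ (hw ▸ le_rfl)

lemma dK_eq_iSup_point (k ℓ : SLabel Act) :
    dK k ℓ = ⨆ n : {n : ℤ // LabelLE (k.1, EInterval.point n) k},
      dK (k.1, EInterval.point n) ℓ := by
  refine le_antisymm ?_ (iSup_le fun n => dK_mono_left n.2)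
  rcases eq_or_ne k.1 ℓ.1 with hk | hk
  · rw [dK_of_eq hk]
    refine max_le ((erealToNNE_lo_sub_lo_le_iSup k ℓ.2).trans (iSup_mono fun n => ?_))
      ((erealToNNE_hi_sub_hi_le_iSup k ℓ.2).trans (iSup_mono fun n => ?_))
    · exact (le_max_left _ _).trans_eq (dK_of_eq (k := (k.1, EInterval.point n)) hk).symm
    · exact (le_max_right _ _).trans_eq (dK_of_eq (k := (k.1, EInterval.point n)) hk).symm
  · obtain ⟨n, hn⟩ := exists_point_labelLE k
    rw [dK_of_ne hk]
    exact le_iSup_of_le ⟨n, hn⟩ (dK_of_ne (k := (k.1, EInterval.point n)) hk).ge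

lemma dK_point_self (a : Act) (n : ℤ) : dK (a, EInterval.point n) (a, EInterval.point n) = 0 := by
  simp [dK_of_eq, EInterval.point, erealToNNE_zero]

lemma exists_isImpLabel_labelLE_dK_le {k₁ : SLabel Act} (hk₁ : IsImpLabel k₁) (k₂ : SLabel Act) :
    ∃ k, IsImpLabel k ∧ LabelLE k k₂ ∧ dK k₁ k ≤ dK k₁ k₂ := by
  rcases eq_or_ne k₁.1 k₂.1 with ha | ha
  swap
  · obtain ⟨m, hm⟩ := exists_point_labelLE k₂
    exact ⟨_, isImpLabel_point _ m, hm, le_top.trans (dK_of_ne ha).ge⟩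
  obtain ⟨n, hn⟩ := hk₁.eq_point
  obtain ⟨a, J⟩ := k₂
  obtain rfl : k₁ = (a, EInterval.point n) := hn.trans (by rw [ha])
  have hdK : dK (a, EInterval.point n) (a, J) =
      max (erealToNNE (J.lo - ((n : ℝ) : EReal))) (erealToNNE (((n : ℝ) : EReal) - J.hi)) :=
    dK_of_eq rfl
  have hdK' : ∀ m : ℤ, dK (a, EInterval.point n) (a, EInterval.point m) =
      max (erealToNNE (((m : ℝ) : EReal) - ((n : ℝ) : EReal)))
        (erealToNNE (((n : ℝ) : EReal) - ((m : ℝ) : EReal))) :=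
    fun m => dK_of_eq rfl
  by_cases hlo : J.lo ≤ ((n : ℝ) : EReal)
  · by_cases hhi : ((n : ℝ) : EReal) ≤ J.hi
    · exact ⟨_, isImpLabel_point a n, ⟨rfl, hlo, hhi⟩, (dK_point_self a n).le.trans zero_le⟩
    rcases J.hi_mem with hV | ⟨V, hV⟩
    · exact absurd (hV ▸ le_top) hhi
    have hVn : V ≤ n := by
      have := (not_le.mp hhi).le; rw [hV] at this; exact_mod_cast this
    refine ⟨_, isImpLabel_point a V, ⟨rfl, J.lo_le_hi.trans hV.le, hV.ge⟩, ?_⟩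
    rw [hdK', hdK, ← hV, max_eq_right (hV ▸ erealToNNE_sub_le_erealToNNE_sub hVn)]
    exact le_max_right _ _
  · rcases J.lo_mem with hU | ⟨U, hU⟩
    · exact absurd (hU ▸ bot_le) hlo
    have hnU : n ≤ U := by
      have := (not_le.mp hlo).le; rw [hU] at this; exact_mod_cast this
    refine ⟨_, isImpLabel_point a U, ⟨rfl, hU.le, hU.ge.trans J.lo_le_hi⟩, ?_⟩
    rw [hdK', hdK, ← hU, max_eq_left (hU ▸ erealToNNE_sub_le_erealToNNE_sub hnU)]
    exact le_max_left _ _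

def WMTS.reroot (S : WMTS Act) (s : S.State) : WMTS Act := { S with init := s }

def IsRefinementRel (S₁ S₂ : WMTS Act) (R : S₁.State → S₂.State → Prop) : Prop :=
  ∀ s₁ s₂, R s₁ s₂ →
    (∀ k₁ t₁, S₁.may s₁ k₁ t₁ → ∃ k₂ t₂, S₂.may s₂ k₂ t₂ ∧ LabelLE k₁ k₂ ∧ R t₁ t₂) ∧
    (∀ k₂ t₂, S₂.must s₂ k₂ t₂ → ∃ k₁ t₁, S₁.must s₁ k₁ t₁ ∧ LabelLE k₁ k₂ ∧ R t₁ t₂)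

lemma IsRefinementRel.reroot_mem_impl {I S : WMTS Act} {R : I.State → S.State → Prop}
    (hR : IsRefinementRel I S R) (hI : I.IsImplementation) {i : I.State} {s : S.State}
    (h : R i s) : I.reroot i ∈ Impl (S.reroot s) :=
  ⟨hI, R, h, hR⟩

lemma isRefinementRel_refines_reroot (S₁ S₂ : WMTS Act) :
    IsRefinementRel S₁ S₂ fun s₁ s₂ => Refines (S₁.reroot s₁) (S₂.reroot s₂) := by
  rintro s₁ s₂ ⟨R, hR₀, hR⟩
  refine ⟨fun k₁ t₁ h => ?_, fun k₂ t₂ h => ?_⟩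
  · obtain ⟨k₂, t₂, h₂, hk, ht⟩ := (hR _ _ hR₀).1 k₁ t₁ h
    exact ⟨k₂, t₂, h₂, hk, R, ht, hR⟩
  · obtain ⟨k₁, t₁, h₁, hk, ht⟩ := (hR _ _ hR₀).2 k₂ t₂ h
    exact ⟨k₁, t₁, h₁, hk, R, ht, hR⟩

def mustClosure (S : WMTS Act) : WMTS Act where
  State := S.State
  init := S.init
  may s k t := ∃ k₀ n, S.must s k₀ t ∧ LabelLE (k₀.1, EInterval.point n) k₀ ∧
    k = (k₀.1, EInterval.point n)
  must s k t := ∃ k₀ n, S.must s k₀ t ∧ LabelLE (k₀.1, EInterval.point n) k₀ ∧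
    k = (k₀.1, EInterval.point n)
  must_may _ k _ h := ⟨k, .refl k, h⟩

lemma mustClosure_mem_impl (S : WMTS Act) : mustClosure S ∈ Impl S := by
  refine ⟨⟨fun _ _ _ => Iff.rfl, ?_⟩, Eq, rfl, ?_⟩
  · rintro s k t ⟨k₀, n, -, -, rfl⟩
    exact isImpLabel_point _ n
  rintro s _ rfl
  refine ⟨?_, fun k₂ t₂ h => ?_⟩
  · rintro k t ⟨k₀, n, h, hn, rfl⟩
    obtain ⟨ℓ, hℓ, hmay⟩ := S.must_may _ _ _ h
    exact ⟨ℓ, t, hmay, hn.trans hℓ, rfl⟩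
  · obtain ⟨n, hn⟩ := exists_point_labelLE k₂
    exact ⟨_, t₂, ⟨k₂, n, h, hn, rfl⟩, hn, rfl⟩

instance (S : WMTS Act) : Nonempty (Impl S) := ⟨⟨_, mustClosure_mem_impl S⟩⟩

section Unfold

variable {lam : ℝ≥0∞} {S₁ S₂ : WMTS Act}

lemma iInf_may_le_dm {s₁ t₁ : S₁.State} {k₁ : SLabel Act} (h : S₁.may s₁ k₁ t₁) (s₂ : S₂.State) :
    ⨅ k₂, ⨅ t₂, ⨅ _ : S₂.may s₂ k₂ t₂, dK k₁ k₂ + lam * dm lam S₁ S₂ t₁ t₂ ≤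
      dm lam S₁ S₂ s₁ s₂ := by
  refine le_of_le_of_eq ?_ (congrFun₂ (OrderHom.map_lfp (dmF lam S₁ S₂)) s₁ s₂)
  exact le_max_of_le_left (le_iSup₂_of_le k₁ t₁ (le_iSup_of_le h le_rfl))

lemma iInf_must_le_dm {s₂ t₂ : S₂.State} {k₂ : SLabel Act} (h : S₂.must s₂ k₂ t₂) (s₁ : S₁.State) :
    ⨅ k₁, ⨅ t₁, ⨅ _ : S₁.must s₁ k₁ t₁, dK k₁ k₂ + lam * dm lam S₁ S₂ t₁ t₂ ≤
      dm lam S₁ S₂ s₁ s₂ := by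
  refine le_of_le_of_eq ?_ (congrFun₂ (OrderHom.map_lfp (dmF lam S₁ S₂)) s₁ s₂)
  exact le_max_of_le_right (le_iSup₂_of_le k₂ t₂ (le_iSup_of_le h le_rfl))

lemma iInf_left_le_di {i₁ j₁ : S₁.State} {k₁ : SLabel Act} (h : S₁.must i₁ k₁ j₁) (i₂ : S₂.State) :
    ⨅ k₂, ⨅ j₂, ⨅ _ : S₂.must i₂ k₂ j₂, dK k₁ k₂ + lam * di lam S₁ S₂ j₁ j₂ ≤
      di lam S₁ S₂ i₁ i₂ := by
  refine le_of_le_of_eq ?_ (congrFun₂ (OrderHom.map_lfp (diF lam S₁ S₂)) i₁ i₂)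
  exact le_max_of_le_left (le_iSup₂_of_le k₁ j₁ (le_iSup_of_le h le_rfl))

lemma iInf_right_le_di {i₂ j₂ : S₂.State} {k₂ : SLabel Act} (h : S₂.must i₂ k₂ j₂) (i₁ : S₁.State) :
    ⨅ k₁, ⨅ j₁, ⨅ _ : S₁.must i₁ k₁ j₁, dK k₁ k₂ + lam * di lam S₁ S₂ j₁ j₂ ≤
      di lam S₁ S₂ i₁ i₂ := by
  refine le_of_le_of_eq ?_ (congrFun₂ (OrderHom.map_lfp (diF lam S₁ S₂)) i₁ i₂)
  exact le_max_of_le_right (le_iSup₂_of_le k₂ j₂ (le_iSup_of_le h le_rfl))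

end Unfold

lemma dm_le_dm_of_isRefinementRel {lam : ℝ≥0∞} {A B C : WMTS Act} {R : A.State → B.State → Prop}
    (hR : IsRefinementRel A B R) {a : A.State} {b : B.State} (hab : R a b) (c : C.State) :
    dm lam A C a c ≤ dm lam B C b c := by
  suffices h : dm lam A C ≤ fun a c => ⨅ b : {b // R a b}, dm lam B C b c from
    (h a c).trans (iInf_le_of_le ⟨b, hab⟩ le_rfl)
  refine OrderHom.lfp_le _ fun a c => le_iInf fun b => max_le ?_ ?_
  · refine iSup₂_le fun k₁ t₁ => iSup_le fun h => ?_
    obtain ⟨k₂, t₂, h₂, hk, ht⟩ := (hR a b b.2).1 k₁ t₁ h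
    refine le_trans ?_ (iInf_may_le_dm h₂ c)
    refine iInf₂_mono fun k t => iInf_mono fun _ => add_le_add (dK_mono_left hk) ?_
    exact mul_le_mul_right (iInf_le (fun b : {b // R t₁ b} => dm lam B C b t) ⟨t₂, ht⟩) lam
  · refine iSup₂_le fun k t => iSup_le fun h => le_trans ?_ (iInf_must_le_dm (S₁ := B) h b.1)
    refine le_iInf₂ fun k₂ t₂ => le_iInf fun h₂ => ?_
    obtain ⟨k₁, t₁, h₁, hk, ht⟩ := (hR a b b.2).2 k₂ t₂ h₂
    refine iInf₂_le_of_le k₁ t₁ (iInf_le_of_le h₁ (add_le_add (dK_mono_left hk) ?_))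
    exact mul_le_mul_right (iInf_le (fun b : {b // R t₁ b} => dm lam B C b t) ⟨t₂, ht⟩) lam

lemma di_le_di_of_embedding {lam : ℝ≥0∞} {I' I J : WMTS Act} (e : I'.State → I.State)
    (he : ∀ x k q, I.must (e x) k q ↔ ∃ x', I'.must x k x' ∧ q = e x') (x : I'.State)
    (j : J.State) : di lam I' J x j ≤ di lam I J (e x) j := by
  suffices h : di lam I' J ≤ fun x j => di lam I J (e x) j from h x j
  refine OrderHom.lfp_le _ fun x j => max_le ?_ ?_
  · refine iSup₂_le fun k₁ x' => iSup_le fun h => ?_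
    exact iInf_left_le_di ((he x k₁ (e x')).mpr ⟨x', h, rfl⟩) j
  · refine iSup₂_le fun k₂ j' => iSup_le fun h => le_trans ?_ (iInf_right_le_di h (e x))
    refine le_iInf₂ fun k₁ q => le_iInf fun hq => ?_
    obtain ⟨x', hx', rfl⟩ := (he x k₁ q).mp hq
    exact iInf₂_le_of_le k₁ x' (iInf_le_of_le hx' le_rfl)

noncomputable def implDist (lam : ℝ≥0∞) (I S : WMTS Act) : ℝ≥0∞ :=
  ⨅ J ∈ Impl S, diInit lam I J

section Greedy

variable (lam δ : ℝ≥0∞) (I S : WMTS Act)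

def greedyStep (p : I.State × S.State) (k : SLabel Act) (q : I.State × S.State) : Prop :=
  ∃ k₁ k₂, I.must p.1 k₁ q.1 ∧ S.may p.2 k₂ q.2 ∧ IsImpLabel k ∧ LabelLE k k₂ ∧
    dK k₁ k + lam * dm lam I S q.1 q.2 ≤ dm lam I S p.1 p.2 + δ

def greedyImpl : WMTS Act where
  State := I.State × S.State
  init := (I.init, S.init)
  may := greedyStep lam δ I S
  must := greedyStep lam δ I S
  must_may _ k _ h := ⟨k, .refl k, h⟩

variable {lam δ I S}

lemma exists_greedyStep_of_must_left (hI : I.IsImplementation) (hδ : δ ≠ 0)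
    {p : I.State × S.State} (hp : dm lam I S p.1 p.2 ≠ ⊤) {k₁ : SLabel Act} {j : I.State}
    (h : I.must p.1 k₁ j) :
    ∃ k t, greedyStep lam δ I S p k (j, t) ∧
      dK k₁ k + lam * dm lam I S j t ≤ dm lam I S p.1 p.2 + δ := by
  have := (iInf_may_le_dm ((hI.1 _ _ _).mpr h) p.2).trans_lt (ENNReal.lt_add_right hp hδ)
  simp only [iInf_lt_iff] at this
  obtain ⟨k₂, t, h₂, hcost⟩ := this
  obtain ⟨k, hk, hkk₂, hdK⟩ := exists_isImpLabel_labelLE_dK_le (hI.2 _ _ _ h) k₂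
  have hcost' := (add_le_add_left hdK _).trans hcost.le
  exact ⟨k, t, ⟨k₁, k₂, h, h₂, hk, hkk₂, hcost'⟩, hcost'⟩

lemma exists_greedyStep_of_must_right (hI : I.IsImplementation) (hδ : δ ≠ 0)
    {p : I.State × S.State} (hp : dm lam I S p.1 p.2 ≠ ⊤) {k₂ : SLabel Act} {t : S.State}
    (h : S.must p.2 k₂ t) :
    ∃ k j, greedyStep lam δ I S p k (j, t) ∧ LabelLE k k₂ := by
  have := (iInf_must_le_dm h p.1).trans_lt (ENNReal.lt_add_right hp hδ)
  simp only [iInf_lt_iff] at this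
  obtain ⟨k₁, j, h₁, hcost⟩ := this
  obtain ⟨k, hk, hkk₂, hdK⟩ := exists_isImpLabel_labelLE_dK_le (hI.2 _ _ _ h₁) k₂
  obtain ⟨ℓ, hk₂ℓ, hℓ⟩ := S.must_may _ _ _ h
  exact ⟨k, j, ⟨k₁, ℓ, h₁, hℓ, hk, hkk₂.trans hk₂ℓ, (add_le_add_left hdK _).trans hcost.le⟩, hkk₂⟩

lemma greedyImpl_mem_impl (hlam : lam ≠ 0) (hδ : δ ≠ 0) (hδ' : δ ≠ ⊤) (hI : I.IsImplementation)
    (hD : dm lam I S I.init S.init ≠ ⊤) : greedyImpl lam δ I S ∈ Impl S := by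
  have hfin : ∀ {p k q}, greedyStep lam δ I S p k q → dm lam I S p.1 p.2 ≠ ⊤ →
      dm lam I S q.1 q.2 ≠ ⊤ := fun ⟨_, _, _, _, _, _, hcost⟩ hp =>
    ne_top_of_add_mul_le hcost (ENNReal.add_ne_top.mpr ⟨hp, hδ'⟩) hlam
  refine ⟨⟨fun _ _ _ => Iff.rfl, fun _ _ _ ⟨_, _, _, _, hk, _⟩ => hk⟩,
    fun q s => q.2 = s ∧ dm lam I S q.1 q.2 ≠ ⊤, ⟨rfl, hD⟩, ?_⟩
  rintro p _ ⟨rfl, hp⟩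
  refine ⟨fun k q h => ?_, fun k₂ t h => ?_⟩
  · obtain ⟨_, k₂, _, h₂, _, hk, _⟩ := id h
    exact ⟨k₂, q.2, h₂, hk, rfl, hfin h hp⟩
  · obtain ⟨k, j, hstep, hk⟩ := exists_greedyStep_of_must_right hI hδ hp h
    exact ⟨k, (j, t), hstep, hk, rfl, hfin hstep hp⟩

lemma diInit_greedyImpl_le (hlam : lam < 1) (hI : I.IsImplementation) {ε : ℝ≥0∞} (hε : ε ≠ 0) :
    diInit lam I (greedyImpl lam ((1 - lam) * ε) I S) ≤ dm lam I S I.init S.init + ε := by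
  set δ := (1 - lam) * ε
  have hδ : δ ≠ 0 := mul_ne_zero (tsub_pos_of_lt hlam).ne' hε
  have hcost : ∀ {a b c : ℝ≥0∞}, a + lam * b ≤ c + δ → a + lam * (b + ε) ≤ c + ε := by
    intro a b c h
    calc a + lam * (b + ε) = (a + lam * b) + lam * ε := by rw [mul_add, add_assoc]
      _ ≤ c + δ + lam * ε := add_le_add_left h _
      _ = c + ε := by rw [add_assoc, ← add_mul, tsub_add_cancel_of_le hlam.le, one_mul]
  classical
  let f : I.State → I.State × S.State → ℝ≥0∞ :=
    fun i q => if i = q.1 then dm lam I S q.1 q.2 + ε else ⊤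
  suffices h : di lam I (greedyImpl lam δ I S) ≤ f from (h _ _).trans_eq (if_pos rfl)
  refine OrderHom.lfp_le _ fun i q => ?_
  by_cases hiq : i = q.1
  swap
  · exact le_top.trans_eq (if_neg hiq).symm
  obtain ⟨i', s⟩ := q
  obtain rfl : i = i' := hiq
  by_cases hD : dm lam I S i s = ⊤
  · exact le_top.trans_eq (by simp [f, hD])
  refine le_of_le_of_eq (max_le (iSup₂_le fun k₁ j => iSup_le fun h => ?_)
    (iSup₂_le fun k q => iSup_le fun h => ?_)) (if_pos rfl).symm
  · obtain ⟨k, t, hstep, hc⟩ := exists_greedyStep_of_must_left hI hδ (p := (i, s)) hD h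
    refine iInf₂_le_of_le k (j, t) (iInf_le_of_le hstep ?_)
    dsimp only [f]
    rw [if_pos rfl]
    exact hcost hc
  · obtain ⟨k₁, _, h₁, -, -, -, hc⟩ := h
    refine iInf₂_le_of_le k₁ q.1 (iInf_le_of_le h₁ ?_)
    dsimp only [f]
    rw [if_pos rfl]
    exact hcost hc

end Greedy

lemma implDist_le_dm {lam : ℝ≥0∞} (hlam₀ : lam ≠ 0) (hlam₁ : lam < 1) {I : WMTS Act}
    (hI : I.IsImplementation) (S : WMTS Act) : implDist lam I S ≤ dm lam I S I.init S.init := by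
  rcases eq_or_ne (dm lam I S I.init S.init) ⊤ with hD | hD
  · exact hD ▸ le_top
  refine ENNReal.le_of_forall_pos_le_add fun ε hε _ => ?_
  have hε : (ε : ℝ≥0∞) ≠ 0 := ENNReal.coe_ne_zero.mpr hε.ne'
  refine iInf₂_le_of_le _ (greedyImpl_mem_impl hlam₀ ?_ ?_ hI hD) (diInit_greedyImpl_le hlam₁ hI hε)
  · exact mul_ne_zero (tsub_pos_of_lt hlam₁).ne' hε
  · exact ENNReal.mul_ne_top (ENNReal.sub_ne_top ENNReal.one_ne_top) ENNReal.coe_ne_top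

lemma dt_le_dmInit {lam : ℝ≥0∞} (hlam₀ : lam ≠ 0) (hlam₁ : lam < 1) (S₁ S₂ : WMTS Act) :
    dt lam S₁ S₂ ≤ dmInit lam S₁ S₂ :=
  iSup₂_le fun _ ⟨hI, _, hR₀, hR⟩ =>
    (implDist_le_dm hlam₀ hlam₁ hI S₂).trans (dm_le_dm_of_isRefinementRel hR hR₀ _)

section RootedSum

variable {ι : Type} (κ : ι → SLabel Act) (J : ι → WMTS Act)

def rootedSumStep : Option (Σ i, (J i).State) → SLabel Act → Option (Σ i, (J i).State) → Prop
  | none, k, some ⟨i, x⟩ => x = (J i).init ∧ k = κ i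
  | some ⟨i, x⟩, k, some q => ∃ y, q = ⟨i, y⟩ ∧ (J i).must x k y
  | _, _, none => False

def rootedSum : WMTS Act where
  State := Option (Σ i, (J i).State)
  init := none
  may := rootedSumStep κ J
  must := rootedSumStep κ J
  must_may _ k _ h := ⟨k, .refl k, h⟩

lemma rootedSum_must_some_iff (i : ι) (x : (J i).State) (k : SLabel Act)
    (q : (rootedSum κ J).State) :
    (rootedSum κ J).must (some ⟨i, x⟩) k q ↔ ∃ y, (J i).must x k y ∧ q = some ⟨i, y⟩ := by
  rcases q with _ | q
  · simp [rootedSum, rootedSumStep]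
  · exact ⟨fun ⟨y, hq, h⟩ => ⟨y, h, hq ▸ rfl⟩, fun ⟨y, h, hq⟩ => ⟨y, Option.some_inj.mp hq, h⟩⟩

variable {κ J}

lemma rootedSum_mem_impl {S : WMTS Act} {s : S.State} (hκ : ∀ i, IsImpLabel (κ i))
    (hJ : ∀ i, ∃ k t, S.may s k t ∧ LabelLE (κ i) k ∧ J i ∈ Impl (S.reroot t))
    (hcover : ∀ k t, S.must s k t → ∃ i, LabelLE (κ i) k ∧ J i ∈ Impl (S.reroot t)) :
    rootedSum κ J ∈ Impl (S.reroot s) := by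
  have hJimpl : ∀ i, (J i).IsImplementation := fun i => by
    obtain ⟨_, _, _, _, hmem⟩ := hJ i
    exact hmem.1
  refine ⟨⟨fun _ _ _ => Iff.rfl, ?_⟩, ?_⟩
  · rintro (_ | ⟨i, x⟩) k (_ | q) h
    · exact h.elim
    · exact h.2 ▸ hκ q.1
    · exact h.elim
    · obtain ⟨y, rfl, h⟩ := h
      exact (hJimpl i).2 _ _ _ h
  refine ⟨fun p s' => p.elim (s' = s) fun q => Refines ((J q.1).reroot q.2) (S.reroot s'),
    rfl, ?_⟩
  rintro (_ | ⟨i, x⟩) s' hR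
  · obtain rfl : s = s' := (hR : s' = s).symm
    refine ⟨?_, fun k t h => ?_⟩
    · rintro k (_ | ⟨i, x⟩) ⟨rfl, rfl⟩
      obtain ⟨k', t, hmay, hle, hmem⟩ := hJ i
      exact ⟨k', t, hmay, hle, hmem.2⟩
    · obtain ⟨i, hle, hmem⟩ := hcover k t h
      exact ⟨κ i, some ⟨i, (J i).init⟩, ⟨rfl, rfl⟩, hle, hmem.2⟩
  · have hsucc := isRefinementRel_refines_reroot (J i) S x s' hR
    refine ⟨fun k q h => ?_, fun k t h => ?_⟩
    · obtain ⟨y, hy, rfl⟩ := (rootedSum_must_some_iff κ J i x k q).mp h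
      exact hsucc.1 k y (((hJimpl i).1 _ _ _).mpr hy)
    · obtain ⟨k', y, hy, hle, hR'⟩ := hsucc.2 k t h
      exact ⟨k', some ⟨i, y⟩, (rootedSum_must_some_iff κ J i x k' _).mpr ⟨y, hy, rfl⟩, hle, hR'⟩

variable {lam : ℝ≥0∞} {S I₂ : WMTS Act}

lemma implDist_le_di_rootedSum {t : S.State} {j : I₂.State} (hj : I₂.reroot j ∈ Impl (S.reroot t))
    (i : ι) :
    implDist lam (J i) (S.reroot t) ≤ di lam (rootedSum κ J) I₂ (some ⟨i, (J i).init⟩) j :=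
  (iInf₂_le _ hj).trans
    (di_le_di_of_embedding (I' := J i) (I := rootedSum κ J) (fun x => some ⟨i, x⟩)
      (rootedSum_must_some_iff κ J i) _ j)

lemma iInf_may_le_diInit_rootedSum {s : S.State} (hI₂ : I₂ ∈ Impl (S.reroot s)) (i : ι) :
    ⨅ k, ⨅ t, ⨅ _ : S.may s k t, dK (κ i) k + lam * implDist lam (J i) (S.reroot t) ≤
      diInit lam (rootedSum κ J) I₂ := by
  obtain ⟨hI, R, hR₀, hR⟩ := hI₂
  have hroot : (rootedSum κ J).must none (κ i) (some ⟨i, (J i).init⟩) := ⟨rfl, rfl⟩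
  refine le_trans (le_iInf₂ fun k' j => le_iInf fun h => ?_) (iInf_left_le_di hroot I₂.init)
  obtain ⟨k, t, hmay, hle, hR'⟩ := (hR _ _ hR₀).1 k' j ((hI.1 _ _ _).mpr h)
  refine iInf₂_le_of_le k t (iInf_le_of_le hmay (add_le_add (dK_anti_right hle) ?_))
  exact mul_le_mul_right
    (implDist_le_di_rootedSum (IsRefinementRel.reroot_mem_impl hR hI hR') i) lam

lemma iInf_must_le_diInit_rootedSum {s t : S.State} {k : SLabel Act} (hI₂ : I₂ ∈ Impl (S.reroot s))
    (h : S.must s k t) :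
    ⨅ i, dK (κ i) k + lam * implDist lam (J i) (S.reroot t) ≤ diInit lam (rootedSum κ J) I₂ := by
  obtain ⟨hI, R, hR₀, hR⟩ := hI₂
  obtain ⟨k', j, hj, hle, hR'⟩ := (hR _ _ hR₀).2 k t h
  refine le_trans (le_iInf₂ fun k'' q => le_iInf fun hq => ?_)
    (iInf_right_le_di (S₁ := rootedSum κ J) hj none)
  rcases q with _ | ⟨i, x⟩
  · exact hq.elim
  obtain ⟨rfl, rfl⟩ := hq
  refine iInf_le_of_le i (add_le_add (dK_anti_right hle) ?_)
  exact mul_le_mul_right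
    (implDist_le_di_rootedSum (IsRefinementRel.reroot_mem_impl hR hI hR') i) lam

end RootedSum

lemma le_dt_of_mem_impl {lam r : ℝ≥0∞} {S₁ S₂ I : WMTS Act} (hI : I ∈ Impl S₁)
    (h : ∀ J ∈ Impl S₂, r ≤ diInit lam I J) : r ≤ dt lam S₁ S₂ :=
  le_iSup₂_of_le I hI (le_iInf₂ h)

lemma dK_add_mul_dt_eq_iSup (lam : ℝ≥0∞) (k₁ k₂ : SLabel Act) (T S : WMTS Act) :
    dK k₁ k₂ + lam * dt lam T S =
      ⨆ p : {n : ℤ // LabelLE (k₁.1, EInterval.point n) k₁} × Impl T,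
        dK (k₁.1, EInterval.point p.1) k₂ + lam * implDist lam p.2 S := by
  rw [dK_eq_iSup_point, dt, iSup_subtype', ENNReal.mul_iSup, ENNReal.iSup_add, iSup_prod]
  simp only [ENNReal.add_iSup]
  rfl

noncomputable def dtAt (lam : ℝ≥0∞) (S₁ S₂ : WMTS Act) (s₁ : S₁.State) (s₂ : S₂.State) : ℝ≥0∞ :=
  dt lam (S₁.reroot s₁) (S₂.reroot s₂)

section DtAt

variable {lam : ℝ≥0∞} {S₁ S₂ : WMTS Act}

lemma iInf_may_le_dtAt_of_point {s₁ t₁ : S₁.State} {k₁ : SLabel Act} (h : S₁.may s₁ k₁ t₁)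
    {n : ℤ} (hn : LabelLE (k₁.1, EInterval.point n) k₁) {I : WMTS Act}
    (hI : I ∈ Impl (S₁.reroot t₁)) (s₂ : S₂.State) :
    ⨅ k₂, ⨅ t₂, ⨅ _ : S₂.may s₂ k₂ t₂,
        dK (k₁.1, EInterval.point n) k₂ + lam * implDist lam I (S₂.reroot t₂) ≤
      dtAt lam S₁ S₂ s₁ s₂ := by
  -- Besides the branch into `I`, the root needs a branch for every must-transition of `s₁`.
  let κ : Option {μ : SLabel Act × S₁.State // S₁.must s₁ μ.1 μ.2} → SLabel Act :=
    fun o => o.elim (k₁.1, EInterval.point n)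
      fun μ => (μ.1.1.1, EInterval.point (exists_point_labelLE μ.1.1).choose)
  let J : Option {μ : SLabel Act × S₁.State // S₁.must s₁ μ.1 μ.2} → WMTS Act :=
    fun o => o.elim I fun μ => mustClosure (S₁.reroot μ.1.2)
  have hmem : rootedSum κ J ∈ Impl (S₁.reroot s₁) := by
    refine rootedSum_mem_impl (fun o => ?_) (fun o => ?_) fun k t hk => ?_
    · cases o <;> exact isImpLabel_point _ _
    · rcases o with _ | ⟨⟨k, t⟩, hk⟩
      · exact ⟨k₁, t₁, h, hn, hI⟩
      · obtain ⟨ℓ, hkℓ, hℓ⟩ := S₁.must_may _ _ _ hk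
        exact ⟨ℓ, t, hℓ, (exists_point_labelLE k).choose_spec.trans hkℓ, mustClosure_mem_impl _⟩
    · exact ⟨some ⟨(k, t), hk⟩, (exists_point_labelLE k).choose_spec, mustClosure_mem_impl _⟩
  exact le_dt_of_mem_impl hmem fun I₂ hI₂ =>
    iInf_may_le_diInit_rootedSum (κ := κ) (J := J) hI₂ none

lemma iInf_may_le_dtAt (hdet : Deterministic S₂) {s₁ t₁ : S₁.State} {k₁ : SLabel Act}
    (h : S₁.may s₁ k₁ t₁) (s₂ : S₂.State) :
    ⨅ k₂, ⨅ t₂, ⨅ _ : S₂.may s₂ k₂ t₂, dK k₁ k₂ + lam * dtAt lam S₁ S₂ t₁ t₂ ≤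
      dtAt lam S₁ S₂ s₁ s₂ := by
  simp only [dtAt, dK_add_mul_dt_eq_iSup, iInf_iInf_iInf_eq_iInf_subtype (S₂.may s₂)]
  -- Only may-transitions with the action of `k₁` have finite cost, and there is at most one.
  refine (iInf_iSup_le_iSup_iInf_of_subsingleton (fun μ => μ.1.1.1 = k₁.1) ?_ ?_).trans
    (iSup_le fun p => ?_)
  · rintro ⟨⟨⟨a, I⟩, t⟩, hμ⟩ ⟨⟨⟨a', I'⟩, t'⟩, hμ'⟩ (ha : a = k₁.1) (ha' : a' = k₁.1)
    subst ha ha'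
    obtain ⟨rfl, rfl⟩ := hdet _ _ _ _ _ _ hμ hμ'
    rfl
  · exact fun μ hμ p => by rw [dK_of_ne (k := (k₁.1, EInterval.point _)) (Ne.symm hμ), top_add]
  · exact (iInf_iInf_iInf_eq_iInf_subtype (S₂.may s₂) _).ge.trans
      (iInf_may_le_dtAt_of_point h p.1.2 p.2.2 s₂)

lemma iInf_must_le_dtAt {s₂ t₂ : S₂.State} {k₂ : SLabel Act} (h : S₂.must s₂ k₂ t₂)
    (s₁ : S₁.State) :
    ⨅ k₁, ⨅ t₁, ⨅ _ : S₁.must s₁ k₁ t₁, dK k₁ k₂ + lam * dtAt lam S₁ S₂ t₁ t₂ ≤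
      dtAt lam S₁ S₂ s₁ s₂ := by
  simp only [dtAt, dK_add_mul_dt_eq_iSup, iInf_iInf_iInf_eq_iInf_subtype (S₁.must s₁)]
  rw [iInf_iSup_eq]
  refine iSup_le fun c => ?_
  have hmem : rootedSum (fun μ => (μ.1.1.1, EInterval.point (c μ).1)) (fun μ => (c μ).2) ∈
      Impl (S₁.reroot s₁) := by
    refine rootedSum_mem_impl (fun μ => isImpLabel_point _ _) (fun μ => ?_) fun k t hk => ?_
    · obtain ⟨ℓ, hkℓ, hℓ⟩ := S₁.must_may _ _ _ μ.2
      exact ⟨ℓ, μ.1.2, hℓ, (c μ).1.2.trans hkℓ, (c μ).2.2⟩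
    · exact ⟨⟨(k, t), hk⟩, (c _).1.2, (c _).2.2⟩
  exact le_dt_of_mem_impl hmem fun I₂ hI₂ => iInf_must_le_diInit_rootedSum hI₂ h

end DtAt

lemma dmInit_le_dt {lam : ℝ≥0∞} {S₁ S₂ : WMTS Act} (hdet : Deterministic S₂) :
    dmInit lam S₁ S₂ ≤ dt lam S₁ S₂ := by
  have hpre : dmF lam S₁ S₂ (dtAt lam S₁ S₂) ≤ dtAt lam S₁ S₂ := fun s₁ s₂ =>
    max_le (iSup₂_le fun _ _ => iSup_le fun h => iInf_may_le_dtAt hdet h s₂)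
      (iSup₂_le fun _ _ => iSup_le fun h => iInf_must_le_dtAt h s₁)
  exact OrderHom.lfp_le _ hpre S₁.init S₂.init

theorem dt_eq_dm_of_deterministic_general {Act : Type} (lam : ℝ≥0∞) (hlam0 : 0 < lam)
    (hlam1 : lam < 1) (S₁ S₂ : WMTS Act)
    (hdet : Deterministic S₂) :
    dt lam S₁ S₂ = dmInit lam S₁ S₂ :=
  le_antisymm (dt_le_dmInit hlam0.ne' hlam1 S₁ S₂) (dmInit_le_dt hdet)

/-- for deterministic S₂, thorough and modal refinement
distances coincide. -/
theorem dt_eq_dm_of_deterministic {Act : Type} (lam : ℝ≥0∞) (hlam0 : 0 < lam)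
    (hlam1 : lam < 1) (S₁ S₂ : WMTS Act)
    (hc₁ : CompactlyBranching lam S₁) (hc₂ : CompactlyBranching lam S₂)
    (hdet : Deterministic S₂) :
    dt lam S₁ S₂ = dmInit lam S₁ S₂ :=
  dt_eq_dm_of_deterministic_general lam hlam0 hlam1 S₁ S₂ hdet

end WMTSQuant
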